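/- arXiv:2106.07472 — 2 statements merged into one kernel-verified Lean document; each statement's English description precedes it below -/
import Mathlib

section
/- Let $P$ be a row-stochastic $n\times n$ matrix, $\rho$ a probability vector on $n$ states, $\gamma\in(0,1)$, and define $\tilde P = \gamma P + (1-\gamma)\mathbf{1}\rho^T$. If $d$ is a probability vector satisfying $d^T\tilde P = d^T$ (a stationary distribution of $\tilde P$), and $D$ denotes the diagonal matrix with entries $d_i$, then for every vector $V\in\mathbb{R}^n$ one has $\|PV\|_D^2 \le \frac{1}{\gamma}\|V\|_D^2 - \frac{1-\gamma}{\gamma}\|V\|_\rho^2 \le \frac{1}{\gamma}\|V\|_D^2$, where $\|x\|_M^2 = x^T M x$ and $\|x\|_\rho^2 = \sum_i \rho_i x_i^2$. -/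
open Matrix BigOperators

theorem stmt0 {n : ℕ} (P : Matrix (Fin n) (Fin n) ℝ) (ρ d : Fin n → ℝ) (γ : ℝ)
    (hγ : γ ∈ Set.Ioo (0:ℝ) 1)
    (hPnn : ∀ i j, 0 ≤ P i j) (hProw : ∀ i, ∑ j, P i j = 1)
    (hρnn : ∀ i, 0 ≤ ρ i) (hρsum : ∑ i, ρ i = 1)
    (hdnn : ∀ i, 0 ≤ d i) (hdsum : ∑ i, d i = 1)
    (hstat : Matrix.vecMul d (γ • P + (1-γ) • Matrix.of (fun _ j => ρ j)) = d)
    (V : Fin n → ℝ) :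
    (∑ i, d i * (P.mulVec V i)^2
        ≤ (1/γ) * ∑ i, d i * (V i)^2 - ((1-γ)/γ) * ∑ i, ρ i * (V i)^2)
    ∧ ((1/γ) * ∑ i, d i * (V i)^2 - ((1-γ)/γ) * ∑ i, ρ i * (V i)^2
        ≤ (1/γ) * ∑ i, d i * (V i)^2) := by
  obtain ⟨hγ0, hγ1⟩ := hγ
  have hγne : γ ≠ 0 := ne_of_gt hγ0
  constructor
  · -- pointwise stationarity
    have key : ∀ j, ∑ i, d i * P i j = (d j - (1-γ) * ρ j) / γ := by
      intro j
      have h := congrFun hstat j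
      simp only [Matrix.vecMul, dotProduct, Matrix.add_apply, Matrix.smul_apply,
        Matrix.of_apply, smul_eq_mul] at h
      have h2 : γ * (∑ i, d i * P i j) + (1-γ) * ρ j = d j := by
        have e : ∑ x, d x * (γ * P x j + (1-γ) * ρ j)
            = γ * (∑ i, d i * P i j) + (∑ i, d i) * ((1-γ) * ρ j) := by
          rw [Finset.mul_sum, Finset.sum_mul, ← Finset.sum_add_distrib]
          exact Finset.sum_congr rfl fun i _ => by ring
        rw [e, hdsum, one_mul] at h
        exact h
      field_simp
      linarith
    -- Cauchy-Schwarz / Jensen pointwise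
    have cs : ∀ i, (P.mulVec V i)^2 ≤ ∑ j, P i j * (V j)^2 := by
      intro i
      have h := Finset.sum_sq_le_sum_mul_sum_of_sq_eq_mul Finset.univ
        (r := fun j => P i j * V j) (f := fun j => P i j) (g := fun j => P i j * (V j)^2)
        (fun j _ => hPnn i j) (fun j _ => mul_nonneg (hPnn i j) (sq_nonneg _))
        (fun j _ => by ring)
      rw [hProw i, one_mul] at h
      calc (P.mulVec V i)^2 = (∑ j, P i j * V j)^2 := by
            rw [Matrix.mulVec, dotProduct]
        _ ≤ ∑ j, P i j * (V j)^2 := h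
    calc ∑ i, d i * (P.mulVec V i)^2
        ≤ ∑ i, d i * ∑ j, P i j * (V j)^2 := by
          apply Finset.sum_le_sum
          intro i _
          exact mul_le_mul_of_nonneg_left (cs i) (hdnn i)
      _ = ∑ j, (∑ i, d i * P i j) * (V j)^2 := by
          simp only [Finset.mul_sum]
          rw [Finset.sum_comm]
          apply Finset.sum_congr rfl
          intro j _
          rw [Finset.sum_mul]
          apply Finset.sum_congr rfl
          intro i _
          ring
      _ = (1/γ) * ∑ i, d i * (V i)^2 - ((1-γ)/γ) * ∑ i, ρ i * (V i)^2 := by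
          simp only [key]
          rw [Finset.mul_sum, Finset.mul_sum, ← Finset.sum_sub_distrib]
          apply Finset.sum_congr rfl
          intro j _
          field_simp
  · have : 0 ≤ ((1-γ)/γ) * ∑ i, ρ i * (V i)^2 := by
      apply mul_nonneg
      · apply div_nonneg <;> linarith
      · apply Finset.sum_nonneg
        intro i _
        exact mul_nonneg (hρnn i) (sq_nonneg _)
    linarith
end

section
/- Let $P$ be a row-stochastic $n\times n$ matrix, $\rho$ a probability vector, $\gamma\in(0,1)$, $\tilde P = \gamma P + (1-\gamma)\mathbf{1}\rho^T$, and $d$ a stationary distribution of $\tilde P$ with diagonal matrix $D$. Let $\Phi\in\mathbb{R}^{n\times m}$ have full column rank and suppose $d_i>0$ for all $i$. Define $G = \Phi^T D (I_n - \gamma P)\Phi$. Then there exists $\kappa>0$ such that $\omega^T G\,\omega \ge \kappa\|\omega\|^2$ for all $\omega\in\mathbb{R}^m$; in particular $G$ is invertible. -/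
/-!
Stationarity of `d` for `γ P + (1 - γ) 1 ρᵀ` gives `γ dᵀP ≤ dᵀ`. Combined with row-stochasticity
and AM-GM, the cross term `γ Σ dᵢ Pᵢⱼ xᵢ xⱼ` is at most `√γ Σ dᵢ xᵢ²`, so the (non-symmetric)
form of `D (I - γP)` dominates `(1 - √γ) D`. Pulling back along the injective `Φ` and using
`D ≥ (minᵢ dᵢ) I` gives coercivity of `G`, and a coercive matrix has trivial kernel.
-/

open Matrix BigOperators

theorem Matrix.exists_pos_mul_sum_sq_le_sum_sq_mulVec {ι ι' : Type*} [Fintype ι] [Fintype ι']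
    [DecidableEq ι'] (A : Matrix ι ι' ℝ) (hA : ∀ ω : ι' → ℝ, A *ᵥ ω = 0 → ω = 0) :
    ∃ c > (0 : ℝ), ∀ ω : ι' → ℝ, c * ∑ j, ω j ^ 2 ≤ ∑ i, (A *ᵥ ω) i ^ 2 := by
  let f : EuclideanSpace ℝ ι' →ₗ[ℝ] EuclideanSpace ℝ ι := toLpLin 2 2 A
  have hker : LinearMap.ker f = ⊥ := by
    refine LinearMap.ker_eq_bot'.mpr fun v hv => ?_
    have := hA v.ofLp (by simpa [f] using congrArg WithLp.ofLp hv)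
    simpa using congrArg (WithLp.toLp 2) this
  obtain ⟨K, hK, hf⟩ := f.exists_antilipschitzWith hker
  refine ⟨((K : ℝ) ^ 2)⁻¹, by positivity, fun ω => ?_⟩
  have hle : ‖WithLp.toLp 2 ω‖ ≤ K * ‖WithLp.toLp 2 (A *ᵥ ω)‖ := by
    simpa [f, dist_eq_norm] using hf.le_mul_dist (WithLp.toLp 2 ω) 0
  have hsq := pow_le_pow_left₀ (norm_nonneg _) hle 2
  rw [mul_pow, EuclideanSpace.real_norm_sq_eq, EuclideanSpace.real_norm_sq_eq] at hsq
  rw [inv_mul_le_iff₀ (by positivity)]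
  simpa using hsq

theorem Finite.exists_pos_le_of_forall_pos {ι : Type*} [Finite ι] {d : ι → ℝ}
    (hd : ∀ i, 0 < d i) : ∃ δ > (0 : ℝ), ∀ i, δ ≤ d i := by
  cases isEmpty_or_nonempty ι
  · exact ⟨1, one_pos, isEmptyElim⟩
  · obtain ⟨i₀, hi₀⟩ := Finite.exists_min d
    exact ⟨d i₀, hd i₀, hi₀⟩

theorem Matrix.isUnit_of_coercive {ι : Type*} [Fintype ι] [DecidableEq ι] {A : Matrix ι ι ℝ}
    {κ : ℝ} (hκ : 0 < κ) (hA : ∀ ω : ι → ℝ, κ * ∑ i, ω i ^ 2 ≤ ω ⬝ᵥ A *ᵥ ω) : IsUnit A := by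
  rw [← mulVec_injective_iff_isUnit]
  refine (injective_iff_map_eq_zero A.mulVecLin).mpr fun ω hω => ?_
  have hbound := hA ω
  rw [show A *ᵥ ω = 0 from hω, dotProduct_zero] at hbound
  have hsum : ∑ i, ω i ^ 2 = 0 :=
    le_antisymm (nonpos_of_mul_nonpos_right hbound hκ) (by positivity)
  funext i
  exact pow_eq_zero_iff two_ne_zero |>.mp <|
    (Finset.sum_eq_zero_iff_of_nonneg fun i _ => sq_nonneg (ω i)).mp hsum i (Finset.mem_univ i)

theorem Matrix.dotProduct_transpose_mul_mul_mulVec {R ι ι' : Type*} [CommSemiring R]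
    [Fintype ι] [Fintype ι'] (Φ : Matrix ι ι' R) (M : Matrix ι ι R) (ω : ι' → R) :
    ω ⬝ᵥ (Φᵀ * M * Φ) *ᵥ ω = (Φ *ᵥ ω) ⬝ᵥ M *ᵥ (Φ *ᵥ ω) := by
  rw [← mulVec_mulVec, ← mulVec_mulVec, dotProduct_mulVec, vecMul_transpose]

section Markov

variable {ι : Type*} [Fintype ι] {P : Matrix ι ι ℝ} {d : ι → ℝ} {γ : ℝ}

theorem smul_vecMul_le_of_stationary {ρ : ι → ℝ} (hγ : γ ≤ 1) (hρ : ∀ i, 0 ≤ ρ i)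
    (hd : ∀ i, 0 ≤ d i) (hstat : d ᵥ* (γ • P + (1 - γ) • of fun _ j => ρ j) = d) (j : ι) :
    γ * (d ᵥ* P) j ≤ d j := by
  have hj := congrFun hstat j
  simp only [vecMul_add, vecMul_smul, Pi.add_apply, Pi.smul_apply, smul_eq_mul] at hj
  have : 0 ≤ (1 - γ) * (d ᵥ* of fun _ j => ρ j) j :=
    mul_nonneg (sub_nonneg.2 hγ) (Finset.sum_nonneg fun i _ => mul_nonneg (hd i) (hρ j))
  linarith

theorem dotProduct_diagonal_mul_one_sub_smul_mulVec [DecidableEq ι] (x : ι → ℝ) :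
    x ⬝ᵥ (diagonal d * (1 - γ • P)) *ᵥ x
      = ∑ i, d i * x i ^ 2 - γ * ∑ i, d i * x i * (P *ᵥ x) i := by
  rw [← mulVec_mulVec, sub_mulVec, one_mulVec, smul_mulVec]
  simp only [dotProduct, mulVec_diagonal, Pi.sub_apply, Pi.smul_apply, smul_eq_mul,
    Finset.mul_sum, ← Finset.sum_sub_distrib]
  exact Finset.sum_congr rfl fun i _ => by ring

theorem smul_sum_mul_mulVec_le (hP : ∀ i j, 0 ≤ P i j) (hProw : ∀ i, ∑ j, P i j = 1)
    (hd : ∀ i, 0 ≤ d i) (hγ : 0 ≤ γ) (hdom : ∀ j, γ * (d ᵥ* P) j ≤ d j) (x : ι → ℝ) :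
    γ * ∑ i, d i * x i * (P *ᵥ x) i ≤ √γ * ∑ i, d i * x i ^ 2 := by
  set s := √γ
  have hs : 0 ≤ s := Real.sqrt_nonneg γ
  have hs2 : s ^ 2 = γ := Real.sq_sqrt hγ
  -- AM-GM: `γ a b = s (s a b) ≤ s (a² + γ b²) / 2`
  have amgm : ∀ a b : ℝ, γ * (a * b) ≤ s / 2 * (a ^ 2 + γ * b ^ 2) := fun a b => by
    rw [← hs2]; nlinarith [mul_nonneg hs (sq_nonneg (a - s * b))]
  calc γ * ∑ i, d i * x i * (P *ᵥ x) i
      = ∑ i, ∑ j, d i * P i j * (γ * (x i * x j)) := by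
        simp only [mulVec, dotProduct, Finset.mul_sum]
        exact Finset.sum_congr rfl fun i _ => Finset.sum_congr rfl fun j _ => by ring
    _ ≤ ∑ i, ∑ j, d i * P i j * (s / 2 * (x i ^ 2 + γ * x j ^ 2)) :=
        Finset.sum_le_sum fun i _ => Finset.sum_le_sum fun j _ =>
          mul_le_mul_of_nonneg_left (amgm _ _) (mul_nonneg (hd i) (hP i j))
    _ = s / 2 * ∑ i, d i * x i ^ 2 * ∑ j, P i j
          + s / 2 * γ * (d ⬝ᵥ P *ᵥ fun j => x j ^ 2) := by
        simp only [mulVec, dotProduct, Finset.mul_sum, ← Finset.sum_add_distrib]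
        exact Finset.sum_congr rfl fun i _ => Finset.sum_congr rfl fun j _ => by ring
    _ = s / 2 * ∑ i, d i * x i ^ 2 + s / 2 * ∑ j, γ * (d ᵥ* P) j * x j ^ 2 := by
        rw [dotProduct_mulVec]
        simp only [hProw, mul_one, dotProduct, Finset.mul_sum]
        exact congrArg _ (Finset.sum_congr rfl fun j _ => by ring)
    _ ≤ s / 2 * ∑ i, d i * x i ^ 2 + s / 2 * ∑ j, d j * x j ^ 2 := by
        gcongr with j
        exact hdom j
    _ = s * ∑ i, d i * x i ^ 2 := by ring

theorem one_sub_sqrt_mul_le_dotProduct_mulVec [DecidableEq ι] (hP : ∀ i j, 0 ≤ P i j)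
    (hProw : ∀ i, ∑ j, P i j = 1) (hd : ∀ i, 0 ≤ d i) (hγ : 0 ≤ γ)
    (hdom : ∀ j, γ * (d ᵥ* P) j ≤ d j) (x : ι → ℝ) :
    (1 - √γ) * ∑ i, d i * x i ^ 2 ≤ x ⬝ᵥ (diagonal d * (1 - γ • P)) *ᵥ x := by
  rw [dotProduct_diagonal_mul_one_sub_smul_mulVec]
  linarith [smul_sum_mul_mulVec_le hP hProw hd hγ hdom x]

end Markov

theorem stmt1_general {n m : ℕ} (P : Matrix (Fin n) (Fin n) ℝ) (ρ d : Fin n → ℝ) (γ : ℝ)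
    (Φ : Matrix (Fin n) (Fin m) ℝ)
    (hγ : γ ∈ Set.Ioo (0:ℝ) 1)
    (hPnn : ∀ i j, 0 ≤ P i j) (hProw : ∀ i, ∑ j, P i j = 1)
    (hρnn : ∀ i, 0 ≤ ρ i)
    (hstat : Matrix.vecMul d (γ • P + (1-γ) • Matrix.of (fun _ j => ρ j)) = d)
    (hdpos : ∀ i, 0 < d i)
    (hΦ : ∀ ω : Fin m → ℝ, Φ.mulVec ω = 0 → ω = 0) :
    (∃ κ > (0:ℝ), ∀ ω : Fin m → ℝ,
        κ * ∑ i, ω i ^ 2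
          ≤ ω ⬝ᵥ (Φᵀ * Matrix.diagonal d * (1 - γ • P) * Φ).mulVec ω)
    ∧ IsUnit (Φᵀ * Matrix.diagonal d * (1 - γ • P) * Φ) := by
  obtain ⟨hγ0, hγ1⟩ := hγ
  have hd : ∀ i, 0 ≤ d i := fun i => (hdpos i).le
  have hdom := smul_vecMul_le_of_stationary hγ1.le hρnn hd hstat
  have hsqrt : 0 < 1 - √γ := sub_pos.2 ((Real.sqrt_lt' one_pos).2 (by simpa using hγ1))
  obtain ⟨c, hc, hΦc⟩ := Φ.exists_pos_mul_sum_sq_le_sum_sq_mulVec hΦ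
  obtain ⟨δ, hδ, hδd⟩ := Finite.exists_pos_le_of_forall_pos hdpos
  have hcoercive : ∃ κ > (0:ℝ), ∀ ω : Fin m → ℝ,
      κ * ∑ i, ω i ^ 2 ≤ ω ⬝ᵥ (Φᵀ * diagonal d * (1 - γ • P) * Φ) *ᵥ ω := by
    refine ⟨(1 - √γ) * δ * c, by positivity, fun ω => ?_⟩
    rw [Matrix.mul_assoc Φᵀ, dotProduct_transpose_mul_mul_mulVec]
    calc (1 - √γ) * δ * c * ∑ i, ω i ^ 2 = (1 - √γ) * (δ * (c * ∑ i, ω i ^ 2)) := by ring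
      _ ≤ (1 - √γ) * (δ * ∑ i, (Φ *ᵥ ω) i ^ 2) := by gcongr; exact hΦc ω
      _ ≤ (1 - √γ) * ∑ i, d i * (Φ *ᵥ ω) i ^ 2 := by
        rw [Finset.mul_sum]
        gcongr with i
        exact hδd i
      _ ≤ _ := one_sub_sqrt_mul_le_dotProduct_mulVec hPnn hProw hd hγ0.le hdom _
  obtain ⟨κ, hκ, hbound⟩ := hcoercive
  exact ⟨⟨κ, hκ, hbound⟩, isUnit_of_coercive hκ hbound⟩

theorem stmt1 {n m : ℕ} (P : Matrix (Fin n) (Fin n) ℝ) (ρ d : Fin n → ℝ) (γ : ℝ)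
    (Φ : Matrix (Fin n) (Fin m) ℝ)
    (hγ : γ ∈ Set.Ioo (0:ℝ) 1)
    (hPnn : ∀ i j, 0 ≤ P i j) (hProw : ∀ i, ∑ j, P i j = 1)
    (hρnn : ∀ i, 0 ≤ ρ i) (hρsum : ∑ i, ρ i = 1)
    (hdnn : ∀ i, 0 ≤ d i) (hdsum : ∑ i, d i = 1)
    (hstat : Matrix.vecMul d (γ • P + (1-γ) • Matrix.of (fun _ j => ρ j)) = d)
    (hdpos : ∀ i, 0 < d i)
    (hΦ : ∀ ω : Fin m → ℝ, Φ.mulVec ω = 0 → ω = 0) :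
    (∃ κ > (0:ℝ), ∀ ω : Fin m → ℝ,
        κ * ∑ i, ω i ^ 2
          ≤ ω ⬝ᵥ (Φᵀ * Matrix.diagonal d * (1 - γ • P) * Φ).mulVec ω)
    ∧ IsUnit (Φᵀ * Matrix.diagonal d * (1 - γ • P) * Φ) :=
  stmt1_general P ρ d γ Φ hγ hPnn hProw hρnn hstat hdpos hΦ
end
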